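/- Let i, k ≥ 1 and j ≥ 0 be natural numbers, and let c = iterExp j 1 + 1. Then the function n ↦ iterExp i (c * iterExp j (n^k)) is not in O(iterExp (i+j) (n^k)): for all constants d ≥ iterExp (i+j) 1 and n₀, there exists n ≥ n₀ with iterExp i (c * iterExp j (n^k)) > d * iterExp (i+j) (n^k). -/

import Mathlib

/-!
With `m = iterExp j (n ^ k)` and `c = iterExp j 1 + 1 ≥ 2` we have `c * m ≥ m + n`. Since the
strictly monotone map `iterExp (i - 1)` on `ℕ` grows by at least `n` when its argument does, one
more exponentiation gives `iterExp i (c * m) ≥ 2 ^ n * iterExp i m = 2 ^ n * iterExp (i + j) (n ^ k)`,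
and `2 ^ n` eventually exceeds any fixed `d`.
-/

/-- The iterated exponential function: `iterExp 0 x = x`, `iterExp (i+1) x = 2 ^ iterExp i x`. -/
def iterExp : ℕ → ℕ → ℕ
  | 0, x => x
  | i + 1, x => 2 ^ iterExp i x

lemma iterExp_eq_iterate (i x : ℕ) : iterExp i x = (2 ^ ·)^[i] x := by
  induction i with
  | zero => rfl
  | succ i ih => rw [Function.iterate_succ_apply', ← ih, iterExp]

lemma iterExp_strictMono (i : ℕ) : StrictMono (iterExp i) := by
  simpa only [funext (iterExp_eq_iterate i)] using
    (pow_right_strictMono₀ (by norm_num : 1 < 2)).iterate i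

lemma le_iterExp (i x : ℕ) : x ≤ iterExp i x :=
  (iterExp_strictMono i).le_apply

lemma iterExp_add (i j x : ℕ) : iterExp (i + j) x = iterExp i (iterExp j x) := by
  simp only [iterExp_eq_iterate, Function.iterate_add_apply]

lemma two_pow_mul_iterExp_succ_le (i x y : ℕ) :
    2 ^ y * iterExp (i + 1) x ≤ iterExp (i + 1) (x + y) := by
  rw [iterExp, iterExp, ← pow_add]
  exact Nat.pow_le_pow_right two_pos (add_comm x y ▸ (iterExp_strictMono i).add_le_nat y x)

theorem iterExp_not_bigO (i j k : ℕ) (hi : 1 ≤ i) (hk : 1 ≤ k) :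
    ∀ d : ℕ, iterExp (i + j) 1 ≤ d → ∀ n₀ : ℕ,
      ∃ n : ℕ, n₀ ≤ n ∧
        d * iterExp (i + j) (n ^ k) < iterExp i ((iterExp j 1 + 1) * iterExp j (n ^ k)) := by
  intro d _ n₀
  obtain ⟨i, rfl⟩ := Nat.exists_eq_add_of_le' hi
  set n := max n₀ d
  set m := iterExp j (n ^ k)
  have hd : d < 2 ^ n := (le_max_right n₀ d).trans_lt Nat.lt_two_pow_self
  have hnm : n ≤ m := (Nat.le_self_pow (by omega) n).trans (le_iterExp j _)
  have hc : 1 ≤ iterExp j 1 := le_iterExp j 1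
  refine ⟨n, le_max_left n₀ d, ?_⟩
  calc d * iterExp (i + 1 + j) (n ^ k) = d * iterExp (i + 1) m := by rw [iterExp_add]
    _ < 2 ^ n * iterExp (i + 1) m := Nat.mul_lt_mul_of_pos_right hd (by simp [iterExp])
    _ ≤ iterExp (i + 1) (m + n) := two_pow_mul_iterExp_succ_le i m n
    _ ≤ iterExp (i + 1) ((iterExp j 1 + 1) * m) := (iterExp_strictMono _).monotone (by nlinarith)
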